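/- Let (y_i)_{i≥0} be vectors in ℝ^K satisfying the recursion y_i = Aᵀ y_{i-1} + x_i, where A is a K×K primitive left-stochastic matrix with Perron vector v, and the perturbations x_i satisfy Vᵀ x_i = 0 (with V = v 𝟙ᵀ) and ‖x_i‖ → 0 almost surely. Then each component of y_i converges almost surely to the common value vᵀ y₀ = ∑_k v_k (y₀)_k. -/

import Mathlib

/-! With `B = Aᵀ` primitive and row-stochastic, the spread `max u - min u` is a seminorm vanishing
on constant vectors which `B` does not increase and some power `B ^ m` contracts by a factor `< 1`.
Since the perturbations have vanishing spread, so do the iterates `y_i`. The weighted mean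
`v ⬝ᵥ y_i` is invariant because `A v = v` and `v ⬝ᵥ x_i = 0`, and every entry of `y_i` lies within
the spread of this mean. -/

open MeasureTheory Filter Finset Matrix

section Spread

variable {ι : Type*} [Fintype ι]

noncomputable def spread (u : ι → ℝ) : ℝ := (⨆ k, u k) - ⨅ k, u k

lemma dotProduct_le_sum_mul_iSup {w : ι → ℝ} (hw : ∀ ℓ, 0 ≤ w ℓ) (u : ι → ℝ) :
    w ⬝ᵥ u ≤ (∑ ℓ, w ℓ) * ⨆ ℓ, u ℓ := by
  rw [sum_mul]
  exact sum_le_sum fun ℓ _ ↦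
    mul_le_mul_of_nonneg_left (le_ciSup (Finite.bddAbove_range u) ℓ) (hw ℓ)

lemma sum_mul_iInf_le_dotProduct {w : ι → ℝ} (hw : ∀ ℓ, 0 ≤ w ℓ) (u : ι → ℝ) :
    (∑ ℓ, w ℓ) * ⨅ ℓ, u ℓ ≤ w ⬝ᵥ u := by
  rw [sum_mul]
  exact sum_le_sum fun ℓ _ ↦
    mul_le_mul_of_nonneg_left (ciInf_le (Finite.bddBelow_range u) ℓ) (hw ℓ)

lemma abs_sub_dotProduct_le_spread {v : ι → ℝ} (hv0 : ∀ ℓ, 0 ≤ v ℓ) (hv1 : ∑ ℓ, v ℓ = 1)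
    (u : ι → ℝ) (k : ι) : |u k - v ⬝ᵥ u| ≤ spread u := by
  have hsup := dotProduct_le_sum_mul_iSup hv0 u
  have hinf := sum_mul_iInf_le_dotProduct hv0 u
  rw [hv1, one_mul] at hsup hinf
  have := le_ciSup (Finite.bddAbove_range u) k
  have := ciInf_le (Finite.bddBelow_range u) k
  rw [abs_sub_le_iff]
  unfold spread
  constructor <;> linarith

variable [Nonempty ι]

lemma spread_nonneg (u : ι → ℝ) : 0 ≤ spread u :=
  sub_nonneg.2 <| (ciInf_le (Finite.bddBelow_range u) (Classical.arbitrary ι)).trans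
    (le_ciSup (Finite.bddAbove_range u) _)

lemma spread_add_le (u w : ι → ℝ) : spread (u + w) ≤ spread u + spread w := by
  have hsup : ⨆ k, (u + w) k ≤ (⨆ k, u k) + ⨆ k, w k := ciSup_le fun k ↦
    add_le_add (le_ciSup (Finite.bddAbove_range u) k) (le_ciSup (Finite.bddAbove_range w) k)
  have hinf : (⨅ k, u k) + ⨅ k, w k ≤ ⨅ k, (u + w) k := le_ciInf fun k ↦
    add_le_add (ciInf_le (Finite.bddBelow_range u) k) (ciInf_le (Finite.bddBelow_range w) k)
  unfold spread
  linarith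

lemma spread_le_two_mul_norm (u : ι → ℝ) : spread u ≤ 2 * ‖u‖ := by
  have hsup : ⨆ k, u k ≤ ‖u‖ := ciSup_le fun k ↦
    (le_abs_self _).trans (norm_le_pi_norm u k)
  have hinf : -‖u‖ ≤ ⨅ k, u k := le_ciInf fun k ↦
    (neg_le_neg (norm_le_pi_norm u k)).trans (neg_abs_le _)
  unfold spread
  linarith

variable [DecidableEq ι]

/-- Writing `M k ℓ = (M k ℓ - δ) + δ`, each `(M *ᵥ u) k` is `δ * ∑ u` plus an average of `u` with
total weight `1 - card ι * δ`. -/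
lemma spread_mulVec_le {M : Matrix ι ι ℝ} (hM : M ∈ rowStochastic ℝ ι) {δ : ℝ}
    (hδ : ∀ k ℓ, δ ≤ M k ℓ) (u : ι → ℝ) :
    spread (M *ᵥ u) ≤ (1 - Fintype.card ι * δ) * spread u := by
  set c : ℝ := 1 - Fintype.card ι * δ
  have hdecomp : ∀ k, (M *ᵥ u) k = (fun ℓ ↦ M k ℓ - δ) ⬝ᵥ u + δ * ∑ ℓ, u ℓ := by
    intro k
    simp only [mulVec, dotProduct, mul_sum, ← sum_add_distrib]
    exact sum_congr rfl fun ℓ _ ↦ by ring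
  have hweight : ∀ k, ∑ ℓ, (M k ℓ - δ) = c := fun k ↦ by
    simp [sum_sub_distrib, sum_row_of_mem_rowStochastic hM k, c]
  have hsup : ⨆ k, (M *ᵥ u) k ≤ c * (⨆ ℓ, u ℓ) + δ * ∑ ℓ, u ℓ := ciSup_le fun k ↦ by
    rw [hdecomp, ← hweight k]
    grw [dotProduct_le_sum_mul_iSup (fun ℓ ↦ sub_nonneg.2 (hδ k ℓ)) u]
  have hinf : c * (⨅ ℓ, u ℓ) + δ * ∑ ℓ, u ℓ ≤ ⨅ k, (M *ᵥ u) k := le_ciInf fun k ↦ by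
    rw [hdecomp, ← hweight k]
    grw [← sum_mul_iInf_le_dotProduct (fun ℓ ↦ sub_nonneg.2 (hδ k ℓ)) u]
  unfold spread
  linarith

lemma spread_mulVec_le_of_mem_rowStochastic {M : Matrix ι ι ℝ} (hM : M ∈ rowStochastic ℝ ι)
    (u : ι → ℝ) : spread (M *ᵥ u) ≤ spread u := by
  simpa using spread_mulVec_le hM (fun k ℓ ↦ nonneg_of_mem_rowStochastic hM) u

end Spread

section RealSequences

/-- Past the index `N` where `e < (ε / 2) * (1 - c)`, the excess `b - ε / 2` contracts by `c`. -/
theorem tendsto_nhds_zero_of_succ_le_mul_add {b e : ℕ → ℝ} {c : ℝ} (hc0 : 0 ≤ c) (hc1 : c < 1)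
    (hb0 : ∀ j, 0 ≤ b j) (hb : ∀ j, b (j + 1) ≤ c * b j + e j)
    (he : Tendsto e atTop (nhds 0)) : Tendsto b atTop (nhds 0) := by
  refine tendsto_order.2
    ⟨fun a ha ↦ Eventually.of_forall fun j ↦ ha.trans_le (hb0 j), fun ε hε ↦ ?_⟩
  obtain ⟨N, hN⟩ := eventually_atTop.1
    (he.eventually (gt_mem_nhds (by nlinarith : (0 : ℝ) < ε / 2 * (1 - c))))
  have hdecay : ∀ j ≥ N, b j - ε / 2 ≤ c ^ (j - N) * |b N - ε / 2| := by
    intro j hj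
    induction j, hj using Nat.le_induction with
    | base => simpa using le_abs_self (b N - ε / 2)
    | succ j hj ih =>
      rw [Nat.sub_add_comm hj, pow_succ', mul_assoc]
      nlinarith [hb j, hN j hj]
  have hgeom : Tendsto (fun t ↦ c ^ t * |b N - ε / 2|) atTop (nhds 0) := by
    simpa using (tendsto_pow_atTop_nhds_zero_of_lt_one hc0 hc1).mul_const |b N - ε / 2|
  obtain ⟨T, hT⟩ := eventually_atTop.1 (hgeom.eventually (gt_mem_nhds (half_pos hε)))
  filter_upwards [eventually_ge_atTop (N + T)] with j hj
  linarith [hdecay j (by omega), hT (j - N) (by omega)]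

theorem tendsto_nhds_zero_of_add_le_mul_add {a E : ℕ → ℝ} {c : ℝ} {m : ℕ} (hm : m ≠ 0)
    (hc0 : 0 ≤ c) (hc1 : c < 1) (ha0 : ∀ i, 0 ≤ a i)
    (hcontract : ∀ i, a (i + m) ≤ c * a i + E i) (hstep : ∀ i, ∀ s < m, a (i + s) ≤ a i + E i)
    (hE : Tendsto E atTop (nhds 0)) : Tendsto a atTop (nhds 0) := by
  have hmul : Tendsto (m * ·) atTop atTop :=
    tendsto_atTop_mono (fun j ↦ Nat.le_mul_of_pos_left j (Nat.pos_of_ne_zero hm)) tendsto_id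
  have hsub : Tendsto (fun j ↦ a (m * j)) atTop (nhds 0) :=
    tendsto_nhds_zero_of_succ_le_mul_add hc0 hc1 (fun j ↦ ha0 _)
      (fun j ↦ by simpa [mul_add] using hcontract (m * j)) (hE.comp hmul)
  have hbound : ∀ i, a i ≤ a (m * (i / m)) + E (m * (i / m)) := fun i ↦ by
    simpa [Nat.div_add_mod] using
      hstep (m * (i / m)) (i % m) (Nat.mod_lt i (Nat.pos_of_ne_zero hm))
  have hsum : Tendsto (fun j ↦ a (m * j) + E (m * j)) atTop (nhds 0) := by
    simpa using hsub.add (hE.comp hmul)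
  exact squeeze_zero ha0 hbound (hsum.comp (Nat.tendsto_div_const_atTop hm))

end RealSequences

lemma Matrix.exists_pos_le_of_forall_pos {ι : Type*} [Finite ι] [Nonempty ι] {M : Matrix ι ι ℝ}
    (hM : ∀ k ℓ, 0 < M k ℓ) : ∃ δ > 0, ∀ k ℓ, δ ≤ M k ℓ := by
  obtain ⟨p, hp⟩ := Finite.exists_min fun p : ι × ι ↦ M p.1 p.2
  exact ⟨_, hM p.1 p.2, fun k ℓ ↦ hp (k, ℓ)⟩

section PerturbedIteration

variable {ι : Type*} [Fintype ι] [DecidableEq ι] {B : Matrix ι ι ℝ} {z w : ℕ → ι → ℝ}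

lemma spread_iterate_le [Nonempty ι] (hB : B ∈ rowStochastic ℝ ι)
    (hz : ∀ i, z (i + 1) = B *ᵥ z i + w (i + 1)) (i s : ℕ) :
    spread (z (i + s)) ≤ spread ((B ^ s) *ᵥ z i) + ∑ j ∈ range s, spread (w (i + j + 1)) := by
  have hdrift : ∀ s,
      spread (z (i + s) - (B ^ s) *ᵥ z i) ≤ ∑ j ∈ range s, spread (w (i + j + 1)) := by
    intro s
    induction s with
    | zero => simp [spread]
    | succ s ih =>
      have hrec : z (i + (s + 1)) - (B ^ (s + 1)) *ᵥ z i =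
          B *ᵥ (z (i + s) - (B ^ s) *ᵥ z i) + w (i + s + 1) := by
        rw [← add_assoc, hz, pow_succ', ← mulVec_mulVec, mulVec_sub]
        abel
      rw [hrec, sum_range_succ]
      grw [spread_add_le, spread_mulVec_le_of_mem_rowStochastic hB, ih]
  calc spread (z (i + s))
      = spread ((B ^ s) *ᵥ z i + (z (i + s) - (B ^ s) *ᵥ z i)) := by rw [add_sub_cancel]
    _ ≤ _ := (spread_add_le _ _).trans (by grw [hdrift])

lemma Matrix.le_mul_apply_of_mem_rowStochastic {M N : Matrix ι ι ℝ} (hM : M ∈ rowStochastic ℝ ι)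
    {δ : ℝ} (hN : ∀ k ℓ, δ ≤ N k ℓ) (k ℓ : ι) : δ ≤ (M * N) k ℓ := by
  calc δ = ∑ j, M k j * δ := by rw [← sum_mul, sum_row_of_mem_rowStochastic hM, one_mul]
    _ ≤ ∑ j, M k j * N j ℓ :=
      sum_le_sum fun j _ ↦ mul_le_mul_of_nonneg_left (hN j ℓ) (nonneg_of_mem_rowStochastic hM)

/-- Some power `B ^ (m + 1)` has all entries `≥ δ > 0`, so every `m + 1` steps the spread contracts
by the factor `1 - card ι * δ < 1`. -/
theorem tendsto_spread_of_perturbed_iterate [Nonempty ι] (hB : B ∈ rowStochastic ℝ ι)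
    (hprim : ∃ m : ℕ, ∀ k ℓ, 0 < (B ^ m) k ℓ) (hz : ∀ i, z (i + 1) = B *ᵥ z i + w (i + 1))
    (hw : Tendsto (fun i ↦ spread (w i)) atTop (nhds 0)) :
    Tendsto (fun i ↦ spread (z i)) atTop (nhds 0) := by
  obtain ⟨m, hm⟩ := hprim
  obtain ⟨δ, hδ, hδm⟩ := exists_pos_le_of_forall_pos hm
  have hδm' : ∀ k ℓ, δ ≤ (B ^ (m + 1)) k ℓ := by
    rw [pow_succ']
    exact le_mul_apply_of_mem_rowStochastic hB hδm
  have hcard : Fintype.card ι * δ ≤ 1 := by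
    let k₀ := Classical.arbitrary ι
    calc Fintype.card ι * δ = ∑ ℓ : ι, δ := by simp
      _ ≤ ∑ ℓ, (B ^ (m + 1)) k₀ ℓ := sum_le_sum fun ℓ _ ↦ hδm' k₀ ℓ
      _ = 1 := sum_row_of_mem_rowStochastic (pow_mem hB _) k₀
  have hcard_pos : 0 < Fintype.card ι * δ := mul_pos (by exact_mod_cast Fintype.card_pos) hδ
  refine tendsto_nhds_zero_of_add_le_mul_add
    (E := fun i ↦ ∑ j ∈ range (m + 1), spread (w (i + j + 1))) m.succ_ne_zero
    (sub_nonneg.2 hcard) (sub_lt_self 1 hcard_pos) (fun i ↦ spread_nonneg _) ?_ ?_ ?_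
  · intro i
    grw [spread_iterate_le hB hz i, spread_mulVec_le (pow_mem hB _) hδm']
  · intro i s hs
    grw [spread_iterate_le hB hz i s, spread_mulVec_le_of_mem_rowStochastic (pow_mem hB _)]
    gcongr
    exact fun _ _ _ ↦ spread_nonneg _
  · simpa [add_assoc] using tendsto_finsetSum (range (m + 1)) fun j _ ↦
      hw.comp (tendsto_add_atTop_nat (j + 1))

end PerturbedIteration

lemma dotProduct_perturbed_iterate_eq {R ι : Type*} [CommSemiring R] [Fintype ι]
    {A : Matrix ι ι R} {v : ι → R} (hAv : A *ᵥ v = v) {z w : ℕ → ι → R}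
    (hz : ∀ i, z (i + 1) = Aᵀ *ᵥ z i + w (i + 1)) (hw : ∀ i, v ⬝ᵥ w i = 0) (i : ℕ) :
    v ⬝ᵥ z i = v ⬝ᵥ z 0 := by
  induction i with
  | zero => rfl
  | succ i ih => rw [hz, dotProduct_add, hw, add_zero, dotProduct_mulVec, vecMul_transpose, hAv, ih]

theorem stmt_18_general {Ω : Type*} {m0 : MeasurableSpace Ω} {μ : Measure Ω}
    (K : ℕ) (A : Matrix (Fin K) (Fin K) ℝ) (v : Fin K → ℝ)
    (hA0 : ∀ k ℓ, 0 ≤ A k ℓ) (hAcol : ∀ k, ∑ ℓ, A ℓ k = 1)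
    (hprim : ∃ m : ℕ, ∀ k ℓ, 0 < (A ^ m) k ℓ)
    (hPerron : A.mulVec v = v) (hvsum : ∑ k, v k = 1) (hvpos : ∀ k, 0 < v k)
    (y x : ℕ → Ω → Fin K → ℝ)
    (hrec : ∀ i, 1 ≤ i → ∀ ω,
      y i ω = (Matrix.transpose A).mulVec (y (i - 1) ω) + x i ω)
    (hxnull : ∀ i ω, ∑ k, v k * x i ω k = 0)
    (hx : ∀ᵐ ω ∂μ, Tendsto (fun i => ‖x i ω‖) atTop (nhds 0)) :
    ∀ᵐ ω ∂μ, ∀ k, Tendsto (fun i => y i ω k) atTop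
      (nhds (∑ ℓ, v ℓ * y 0 ω ℓ)) := by
  have : Nonempty (Fin K) := ⟨⟨0, Nat.pos_of_ne_zero (by rintro rfl; simp at hvsum)⟩⟩
  have hB : Aᵀ ∈ rowStochastic ℝ (Fin K) :=
    transpose_mem_rowStochastic_iff_mem_colStochastic.2 (mem_colStochastic_iff_sum.2 ⟨hA0, hAcol⟩)
  have hBprim : ∃ m : ℕ, ∀ k ℓ, 0 < (Aᵀ ^ m) k ℓ :=
    hprim.imp fun m hm k ℓ ↦ by simpa [← transpose_pow] using hm ℓ k
  filter_upwards [hx] with ω hxω k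
  set z : ℕ → Fin K → ℝ := fun i ↦ y i ω
  have hz : ∀ i, z (i + 1) = Aᵀ *ᵥ z i + x (i + 1) ω := fun i ↦ hrec (i + 1) i.succ_pos ω
  have hxspread : Tendsto (fun i ↦ spread (x i ω)) atTop (nhds 0) :=
    squeeze_zero (fun i ↦ spread_nonneg _) (fun i ↦ spread_le_two_mul_norm _)
      (by simpa using hxω.const_mul 2)
  have hyspread := tendsto_spread_of_perturbed_iterate hB hBprim hz hxspread
  have hinv := dotProduct_perturbed_iterate_eq hPerron hz (fun i ↦ hxnull i ω)
  refine tendsto_sub_nhds_zero_iff.1 (squeeze_zero_norm (fun i ↦ ?_) hyspread)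
  rw [Real.norm_eq_abs, ← dotProduct, ← hinv i]
  exact abs_sub_dotProduct_le_spread (fun ℓ ↦ (hvpos ℓ).le) hvsum _ k

/-- for the recursion `y_i = Aᵀ y_{i-1} + x_i` with `A` a primitive
left-stochastic matrix with Perron vector `v`, perturbations satisfying `vᵀ x_i = 0`
and `‖x_i‖ → 0` a.s., every component of `y_i` converges a.s. to `∑_k v_k (y₀)_k`. -/
theorem stmt_18 {Ω : Type*} {m0 : MeasurableSpace Ω} {μ : Measure Ω} [IsProbabilityMeasure μ]
    (K : ℕ) (A : Matrix (Fin K) (Fin K) ℝ) (v : Fin K → ℝ)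
    (hA0 : ∀ k ℓ, 0 ≤ A k ℓ) (hAcol : ∀ k, ∑ ℓ, A ℓ k = 1)
    (hprim : ∃ m : ℕ, ∀ k ℓ, 0 < (A ^ m) k ℓ)
    (hPerron : A.mulVec v = v) (hvsum : ∑ k, v k = 1) (hvpos : ∀ k, 0 < v k)
    (y x : ℕ → Ω → Fin K → ℝ)
    (hrec : ∀ i, 1 ≤ i → ∀ ω,
      y i ω = (Matrix.transpose A).mulVec (y (i - 1) ω) + x i ω)
    (hxnull : ∀ i ω, ∑ k, v k * x i ω k = 0)
    (hx : ∀ᵐ ω ∂μ, Tendsto (fun i => ‖x i ω‖) atTop (nhds 0)) :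
    ∀ᵐ ω ∂μ, ∀ k, Tendsto (fun i => y i ω k) atTop
      (nhds (∑ ℓ, v ℓ * y 0 ω ℓ)) :=
  stmt_18_general (m0 := m0) K A v hA0 hAcol hprim hPerron hvsum hvpos y x hrec hxnull hx
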